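/- Let f : ℝⁿ → ℝ be differentiable with coordinate-wise Lipschitz constants Lᵢ > 0 (|∇ᵢf(x + α eᵢ) − ∇ᵢf(x)| ≤ Lᵢ|α| for all x, α, i) and suppose f is μ_L-strongly convex with respect to the norm ‖x‖_L = Σᵢ √(Lᵢ)|xᵢ| for some μ_L > 0, with minimizer x*. If x^{k+1} = x^k − (1/L_{i_k})∇_{i_k}f(x^k)e_{i_k} where i_k is chosen by the Gauss-Southwell-Lipschitz rule i_k ∈ argmax_i |∇ᵢf(x^k)|/√(Lᵢ), then f(x^{k+1}) − f(x*) ≤ (1 − μ_L)(f(x^k) − f(x*)). -/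

import Mathlib

/-!
One Gauss-Southwell-Lipschitz step decreases `f` by at least `G² / 2`, where
`G = maxᵢ |∇ᵢ f(x)| / √Lᵢ` is the dual norm `‖∇f(x)‖_L*`; this is the coordinate-wise descent
lemma along the chosen coordinate. On the other hand, minimising the strong-convexity lower bound
over the distance `S = ‖x* - x‖_L` (using `⟪∇f(x), x* - x⟫ ≥ -G S`) gives the
Polyak-Łojasiewicz inequality `μ_L (f(x) - f(x*)) ≤ G² / 2`. Combining the two yields the rate.
-/

open scoped RealInnerProductSpace

theorem le_add_mul_deriv_add_sq_of_abs_deriv_sub_le {g g' : ℝ → ℝ} {K : ℝ}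
    (hg : ∀ t, HasDerivAt g (g' t) t) (hK : ∀ t, |g' t - g' 0| ≤ K * |t|) (t : ℝ) :
    g t ≤ g 0 + t * g' 0 + K / 2 * t ^ 2 := by
  -- `ψ` has derivative `g' s - g' 0 - K s`, which is `≥ 0` for `s ≤ 0` and `≤ 0` for `s ≥ 0`.
  set ψ : ℝ → ℝ := fun s => g s - s * g' 0 - K / 2 * s ^ 2
  have hψ : ∀ s, HasDerivAt ψ (g' s - g' 0 - K * s) s := fun s => by
    refine (((hg s).sub ((hasDerivAt_id s).mul_const (g' 0))).sub
      (((hasDerivAt_id s).pow 2).const_mul (K / 2))).congr_deriv ?_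
    simp only [id, Nat.cast_ofNat]
    ring
  have hψc : Continuous ψ := continuous_iff_continuousAt.2 fun s => (hψ s).continuousAt
  suffices ψ t ≤ ψ 0 by simp only [ψ] at this; linarith
  rcases le_total t 0 with ht | ht
  · refine monotoneOn_of_hasDerivWithinAt_nonneg (convex_Iic 0) hψc.continuousOn
      (fun s _ => (hψ s).hasDerivWithinAt) (fun s hs => ?_) ht Set.self_mem_Iic ht
    rw [interior_Iic, Set.mem_Iio] at hs
    have := hK s
    rw [abs_of_neg hs, abs_le] at this
    linarith
  · refine antitoneOn_of_hasDerivWithinAt_nonpos (convex_Ici 0) hψc.continuousOn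
      (fun s _ => (hψ s).hasDerivWithinAt) (fun s hs => ?_) Set.self_mem_Ici ht ht
    rw [interior_Ici, Set.mem_Ioi] at hs
    have := hK s
    rw [abs_of_pos hs, abs_le] at this
    linarith

theorem HasGradientAt.hasDerivAt_comp_add_smul {F : Type*} [NormedAddCommGroup F]
    [InnerProductSpace ℝ F] [CompleteSpace F] {f : F → ℝ} {g x v : F} {t : ℝ}
    (hf : HasGradientAt f g (x + t • v)) :
    HasDerivAt (fun s : ℝ => f (x + s • v)) ⟪g, v⟫ t := by
  have hline : HasDerivAt (fun s : ℝ => x + s • v) v t := by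
    simpa using ((hasDerivAt_id t).smul_const v).const_add x
  exact (hf.hasFDerivAt.comp_hasDerivAt t hline).congr_deriv (by simp)

section Coordinate

variable {ι : Type*} [Fintype ι] {f : EuclideanSpace ℝ ι → ℝ}

theorem abs_inner_le_mul_sum_of_abs_le {g d : EuclideanSpace ℝ ι} {w : ι → ℝ} {G : ℝ}
    (hg : ∀ i, |g i| ≤ G * w i) : |⟪g, d⟫| ≤ G * ∑ i, w i * |d i| := by
  rw [PiLp.inner_apply, Finset.mul_sum]
  refine (Finset.abs_sum_le_sum_abs _ _).trans (Finset.sum_le_sum fun i _ => ?_)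
  rw [RCLike.inner_apply', conj_trivial, abs_mul]
  exact (mul_le_mul_of_nonneg_right (hg i) (abs_nonneg _)).trans_eq (mul_assoc _ _ _)

theorem mul_sub_le_sq_div_two_of_strongConvex {g x y : EuclideanSpace ℝ ι} {w : ι → ℝ}
    {G μ : ℝ} (hμ : 0 ≤ μ)
    (hsc : f y ≥ f x + ⟪g, y - x⟫ + μ / 2 * (∑ i, w i * |y i - x i|) ^ 2)
    (hg : ∀ i, |g i| ≤ G * w i) :
    μ * (f x - f y) ≤ G ^ 2 / 2 := by
  set S := ∑ i, w i * |y i - x i|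
  have hdual : |⟪g, y - x⟫| ≤ G * S := by
    simpa using abs_inner_le_mul_sum_of_abs_le (d := y - x) hg
  -- minimise `-G S + μ S² / 2` over `S`
  nlinarith [neg_abs_le ⟪g, y - x⟫, sq_nonneg (G - μ * S)]

variable [DecidableEq ι] {f' : EuclideanSpace ℝ ι → EuclideanSpace ℝ ι}

theorem apply_add_smul_single_le (hf : ∀ x, HasGradientAt f (f' x) x) {i : ι} {K : ℝ}
    (hK : ∀ x (α : ℝ), |f' (x + α • EuclideanSpace.single i 1) i - f' x i| ≤ K * |α|)
    (x : EuclideanSpace ℝ ι) (α : ℝ) :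
    f (x + α • EuclideanSpace.single i 1) ≤ f x + α * f' x i + K / 2 * α ^ 2 := by
  have hderiv : ∀ t : ℝ, HasDerivAt (fun s : ℝ => f (x + s • EuclideanSpace.single i 1))
      (f' (x + t • EuclideanSpace.single i 1) i) t := fun t => by
    simpa [EuclideanSpace.inner_single_right] using
      (hf (x + t • EuclideanSpace.single i 1)).hasDerivAt_comp_add_smul
  simpa using le_add_mul_deriv_add_sq_of_abs_deriv_sub_le hderiv
    (fun t => by simpa using hK x t) α

theorem apply_sub_smul_single_le (hf : ∀ x, HasGradientAt f (f' x) x) {i : ι} {K : ℝ}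
    (hK₀ : 0 < K)
    (hK : ∀ x (α : ℝ), |f' (x + α • EuclideanSpace.single i 1) i - f' x i| ≤ K * |α|)
    (x : EuclideanSpace ℝ ι) :
    f (x - (1 / K * f' x i) • EuclideanSpace.single i 1) ≤ f x - f' x i ^ 2 / (2 * K) := by
  have := apply_add_smul_single_le hf hK x (-(1 / K * f' x i))
  rw [neg_smul, ← sub_eq_add_neg] at this
  convert this using 1
  field_simp
  ring

end Coordinate

theorem gauss_southwell_lipschitz_rate_general {n : ℕ}
    (f : EuclideanSpace ℝ (Fin n) → ℝ)
    (f' : EuclideanSpace ℝ (Fin n) → EuclideanSpace ℝ (Fin n))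
    (hf : ∀ x, HasGradientAt f (f' x) x)
    (L : Fin n → ℝ) (hL : ∀ i, 0 < L i)
    (hlip : ∀ (x : EuclideanSpace ℝ (Fin n)) (α : ℝ) (i : Fin n),
      |f' (x + α • EuclideanSpace.single i 1) i - f' x i| ≤ L i * |α|)
    (μL : ℝ) (hμL : 0 < μL)
    (hsc : ∀ x y, f y ≥ f x + ⟪f' x, y - x⟫
      + μL / 2 * (∑ i, Real.sqrt (L i) * |y i - x i|) ^ 2)
    (xs : EuclideanSpace ℝ (Fin n))
    (xk : EuclideanSpace ℝ (Fin n)) (ik : Fin n)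
    (hik : ∀ j, |f' xk j| / Real.sqrt (L j) ≤ |f' xk ik| / Real.sqrt (L ik))
    (xk1 : EuclideanSpace ℝ (Fin n))
    (hstep : xk1 = xk - ((1 / L ik) * f' xk ik) • EuclideanSpace.single ik 1) :
    f xk1 - f xs ≤ (1 - μL) * (f xk - f xs) := by
  set G := |f' xk ik| / Real.sqrt (L ik)
  have hdescent : f xk1 ≤ f xk - G ^ 2 / 2 := by
    have hG : G ^ 2 / 2 = f' xk ik ^ 2 / (2 * L ik) := by
      rw [div_pow, sq_abs, Real.sq_sqrt (hL ik).le]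
      ring
    rw [hstep, hG]
    exact apply_sub_smul_single_le hf (hL ik) (fun x α => hlip x α ik) xk
  have hPL : μL * (f xk - f xs) ≤ G ^ 2 / 2 :=
    mul_sub_le_sq_div_two_of_strongConvex hμL.le (hsc xk xs)
      fun j => (div_le_iff₀ (Real.sqrt_pos.2 (hL j))).1 (hik j)
  linarith

/-- convergence rate of the Gauss-Southwell-Lipschitz rule under
strong convexity in the norm `‖x‖_L = ∑ᵢ √(Lᵢ)|xᵢ|`. -/
theorem gauss_southwell_lipschitz_rate {n : ℕ}
    (f : EuclideanSpace ℝ (Fin n) → ℝ)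
    (f' : EuclideanSpace ℝ (Fin n) → EuclideanSpace ℝ (Fin n))
    (hf : ∀ x, HasGradientAt f (f' x) x)
    (L : Fin n → ℝ) (hL : ∀ i, 0 < L i)
    (hlip : ∀ (x : EuclideanSpace ℝ (Fin n)) (α : ℝ) (i : Fin n),
      |f' (x + α • EuclideanSpace.single i 1) i - f' x i| ≤ L i * |α|)
    (μL : ℝ) (hμL : 0 < μL)
    (hsc : ∀ x y, f y ≥ f x + ⟪f' x, y - x⟫
      + μL / 2 * (∑ i, Real.sqrt (L i) * |y i - x i|) ^ 2)
    (xs : EuclideanSpace ℝ (Fin n)) (hxs : ∀ y, f xs ≤ f y)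
    (xk : EuclideanSpace ℝ (Fin n)) (ik : Fin n)
    (hik : ∀ j, |f' xk j| / Real.sqrt (L j) ≤ |f' xk ik| / Real.sqrt (L ik))
    (xk1 : EuclideanSpace ℝ (Fin n))
    (hstep : xk1 = xk - ((1 / L ik) * f' xk ik) • EuclideanSpace.single ik 1) :
    f xk1 - f xs ≤ (1 - μL) * (f xk - f xs) :=
  gauss_southwell_lipschitz_rate_general f f' hf L hL hlip μL hμL hsc xs xk ik hik xk1 hstep
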